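/- arXiv:1404.4861 — 5 statements merged into one kernel-verified Lean document; each statement's English description precedes it below -/
import Mathlib

section
/- Consider the integrable first-order resonance Hamiltonian on ℂ², H(x₁,x₂) = K(|x₁|² + |x₂|²) + R₁(x₁ + conj(x₁)) + R₀(x₂ + conj(x₂)), where K : ℝ → ℝ is differentiable and R₀, R₁ are real constants, with equations of motion ẋ₁ = i(K'(|x₁|²+|x₂|²)·x₁ + R₁) and ẋ₂ = i(K'(|x₁|²+|x₂|²)·x₂ + R₀). Then along any solution (x₁(t), x₂(t)) of these equations, the quantity |R₀·x₁(t) − R₁·x₂(t)|² is constant in t (this is the Sessin–Henrard–Wisdom reduction: the second rotated mode's action u₂·conj(u₂) is a first integral, making the first-order resonance model integrable). -/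
open Complex

/-! A uniform rotation of the pair `(x₁, x₂)` diagonalises the resonant forcing: the mode
`u = R₀ x₁ - R₁ x₂` feels no forcing, since `R₀ · i R₁ - R₁ · i R₀ = 0`, and so obeys
`u' = i ω(t) u` with the real frequency `ω = K'(|x₁|² + |x₂|²)`. A velocity orthogonal to the
position preserves the norm, so `|u|²` is a first integral. -/

open scoped InnerProductSpace

theorem norm_sq_eq_of_inner_hasDerivAt_eq_zero {F : Type*} [NormedAddCommGroup F]
    [InnerProductSpace ℝ F] {f f' : ℝ → F} (hf : ∀ t, HasDerivAt f (f' t) t)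
    (horth : ∀ t, ⟪f t, f' t⟫_ℝ = 0) (t s : ℝ) : ‖f t‖ ^ 2 = ‖f s‖ ^ 2 := by
  have hderiv : ∀ r, HasDerivAt (‖f ·‖ ^ 2) 0 r := fun r => by
    simpa [horth r] using (hf r).norm_sq
  exact is_const_of_deriv_eq_zero (fun r => (hderiv r).differentiableAt)
    (fun r => (hderiv r).deriv) t s

theorem Complex.inner_I_mul_ofReal_mul_self (ω : ℝ) (z : ℂ) : ⟪z, I * ω * z⟫_ℝ = 0 := by
  rw [Complex.inner, mul_assoc, mul_assoc, mul_conj]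
  simp

theorem Complex.normSq_eq_of_hasDerivAt_I_mul {u : ℝ → ℂ} {ω : ℝ → ℝ}
    (hu : ∀ t, HasDerivAt u (I * ω t * u t) t) (t s : ℝ) : normSq (u t) = normSq (u s) := by
  simpa only [← Complex.sq_norm] using norm_sq_eq_of_inner_hasDerivAt_eq_zero hu
    (fun r => inner_I_mul_ofReal_mul_self (ω r) (u r)) t s

theorem first_order_resonance_integrable_general
    (x₁ x₂ : ℝ → ℂ) (K : ℝ → ℝ) (R₀ R₁ : ℝ)
    (hx₁ : ∀ t, HasDerivAt x₁
      (Complex.I * (((deriv K (normSq (x₁ t) + normSq (x₂ t)) : ℝ) : ℂ) * x₁ t + (R₁ : ℂ))) t)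
    (hx₂ : ∀ t, HasDerivAt x₂
      (Complex.I * (((deriv K (normSq (x₁ t) + normSq (x₂ t)) : ℝ) : ℂ) * x₂ t + (R₀ : ℂ))) t) :
    ∀ t s : ℝ, normSq ((R₀ : ℂ) * x₁ t - (R₁ : ℂ) * x₂ t)
      = normSq ((R₀ : ℂ) * x₁ s - (R₁ : ℂ) * x₂ s) := by
  set ω : ℝ → ℝ := fun t => deriv K (normSq (x₁ t) + normSq (x₂ t))
  have hu : ∀ t, HasDerivAt (fun t => (R₀ : ℂ) * x₁ t - (R₁ : ℂ) * x₂ t)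
      (I * ω t * ((R₀ : ℂ) * x₁ t - (R₁ : ℂ) * x₂ t)) t := fun t =>
    (((hx₁ t).const_mul (R₀ : ℂ)).sub ((hx₂ t).const_mul (R₁ : ℂ))).congr_deriv (by ring)
  exact normSq_eq_of_hasDerivAt_I_mul hu

/-- Sessin–Henrard–Wisdom reduction: for the first-order resonance Hamiltonian
`H = K(|x₁|² + |x₂|²) + R₁(x₁ + conj x₁) + R₀(x₂ + conj x₂)`, the quantity
`|R₀·x₁ − R₁·x₂|²` (the action of the second rotated mode) is a first integral. -/
theorem first_order_resonance_integrable
    (x₁ x₂ : ℝ → ℂ) (K : ℝ → ℝ) (R₀ R₁ : ℝ)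
    (hK : Differentiable ℝ K)
    (hx₁ : ∀ t, HasDerivAt x₁
      (Complex.I * (((deriv K (normSq (x₁ t) + normSq (x₂ t)) : ℝ) : ℂ) * x₁ t + (R₁ : ℂ))) t)
    (hx₂ : ∀ t, HasDerivAt x₂
      (Complex.I * (((deriv K (normSq (x₁ t) + normSq (x₂ t)) : ℝ) : ℂ) * x₂ t + (R₀ : ℂ))) t) :
    ∀ t s : ℝ, normSq ((R₀ : ℂ) * x₁ t - (R₁ : ℂ) * x₂ t)
      = normSq ((R₀ : ℂ) * x₁ s - (R₁ : ℂ) * x₂ s) :=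
  first_order_resonance_integrable_general x₁ x₂ K R₀ R₁ hx₁ hx₂
end

section
/- For the simplified resonant model of a (p+q):p mean-motion resonance of order q ≥ 1, with equation of motion u̇ = i(2u(δ − |u|²) + qR·conj(u)^{q−1}) on ℂ and R ≠ 0: if u ≠ 0 is an equilibrium point (i.e. 2u(δ − |u|²) + qR·conj(u)^{q−1} = 0), then conj(u)^q is real; consequently, writing u = √D·e^{iθ} with D = |u|² > 0, there exists an integer k such that θ = kπ/q and D satisfies δ − D + (−1)^k·(q/2)·R·D^{q/2−1} = 0. -/
/-!
Multiplying the equilibrium equation by `conj u` turns it into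
`2D(δ − D) + qR·conj(u)^q = 0`, so `conj(u)^q` is real. By de Moivre, `u^q = |u|^q e^{iqθ}`
is then real exactly when `qθ = kπ`, in which case `u^q = D^{q/2}(−1)^k`; substituting this back
and dividing by `2D > 0` gives the equation for the action.
-/

open Complex Real

theorem Complex.pow_eq_norm_pow_mul_cos_add_sin (u : ℂ) (n : ℕ) :
    u ^ n = (‖u‖ ^ n : ℝ) * (Real.cos (n * arg u) + Real.sin (n * arg u) * I) := by
  conv_lhs => rw [← norm_mul_cos_add_sin_mul_I u]
  rw [mul_pow, cos_add_sin_mul_I_pow]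
  push_cast
  rfl

theorem Complex.exists_int_pow_eq_of_im_pow_eq_zero {u : ℂ} (hu : u ≠ 0) {n : ℕ}
    (h : (u ^ n).im = 0) :
    ∃ k : ℤ, n * arg u = k * π ∧ u ^ n = ((‖u‖ ^ n * (-1) ^ k : ℝ) : ℂ) := by
  have hsin : Real.sin (n * arg u) = 0 := by
    have him := congrArg Complex.im (u.pow_eq_norm_pow_mul_cos_add_sin n)
    simp only [h, mul_im, ofReal_re, ofReal_im, add_re, add_im, mul_re, I_re, I_im] at him
    simpa [pow_ne_zero n (norm_ne_zero_iff.2 hu)] using him.symm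
  obtain ⟨k, hk⟩ := Real.sin_eq_zero_iff.1 hsin
  refine ⟨k, hk.symm, ?_⟩
  rw [u.pow_eq_norm_pow_mul_cos_add_sin n, hsin, ← hk, cos_int_mul_pi]
  push_cast
  ring

theorem Complex.norm_pow_eq_normSq_rpow (u : ℂ) (n : ℕ) :
    ‖u‖ ^ n = normSq u ^ ((n : ℝ) / 2) := by
  rw [norm_def, Real.sqrt_eq_rpow, ← Real.rpow_natCast, ← Real.rpow_mul (normSq_nonneg u)]
  ring_nf

theorem Complex.im_eq_zero_of_ofReal_add_ofReal_mul_eq_zero {a b : ℝ} (ha : a ≠ 0) {w : ℂ}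
    (h : (b : ℂ) + a * w = 0) : w.im = 0 := by
  have := congrArg Complex.im h
  simp only [add_im, ofReal_im, im_ofReal_mul, zero_add, zero_im] at this
  exact (mul_eq_zero.1 this).resolve_left ha

theorem resonant_equilibrium_mul_conj {δ R : ℝ} {q : ℕ} (hq : 1 ≤ q) {u : ℂ}
    (heq : 2 * u * ((δ : ℂ) - (normSq u : ℂ))
      + (q : ℂ) * (R : ℂ) * (starRingEnd ℂ u) ^ (q - 1) = 0) :
    2 * (normSq u : ℂ) * (δ - normSq u) + q * R * (starRingEnd ℂ u) ^ q = 0 := by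
  obtain ⟨m, rfl⟩ := Nat.exists_eq_add_of_le' hq
  rw [Nat.add_sub_cancel] at heq
  linear_combination starRingEnd ℂ u * heq - 2 * ((δ : ℂ) - normSq u) * mul_conj u

theorem resonant_action_eq {D δ R s : ℝ} (hD : 0 < D) {q : ℝ}
    (h : 2 * D * (δ - D) + q * R * (D ^ (q / 2) * s) = 0) :
    δ - D + s * (q / 2) * R * D ^ (q / 2 - 1) = 0 := by
  rw [Real.rpow_sub_one hD.ne']
  field_simp
  linear_combination h

/-- Nonzero equilibria of the simplified resonant model of an order-`q` MMR:
if `u ≠ 0` satisfies `2u(δ − |u|²) + qR·conj(u)^(q−1) = 0` then `conj(u)^q` is real,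
the argument of `u` equals `kπ/q` for some integer `k`, and the action `D = |u|²`
satisfies `δ − D + (−1)^k (q/2) R D^(q/2−1) = 0`. -/
theorem nonzero_equilibria_of_resonant_model
    (δ R : ℝ) (hR : R ≠ 0) (q : ℕ) (hq : 1 ≤ q) (u : ℂ) (hu : u ≠ 0)
    (heq : 2 * u * ((δ : ℂ) - (normSq u : ℂ))
      + (q : ℂ) * (R : ℂ) * (starRingEnd ℂ u) ^ (q - 1) = 0) :
    ((starRingEnd ℂ u) ^ q).im = 0 ∧
    ∃ k : ℤ, Complex.arg u = k * π / q ∧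
      δ - normSq u + (-1 : ℝ) ^ k * ((q : ℝ) / 2) * R
        * (normSq u : ℝ) ^ ((q : ℝ) / 2 - 1) = 0 := by
  have hq0 : (q : ℝ) ≠ 0 := by exact_mod_cast Nat.one_le_iff_ne_zero.1 hq
  have hbal := resonant_equilibrium_mul_conj hq heq
  have him : ((starRingEnd ℂ u) ^ q).im = 0 :=
    im_eq_zero_of_ofReal_add_ofReal_mul_eq_zero (a := q * R) (b := 2 * normSq u * (δ - normSq u))
      (mul_ne_zero hq0 hR) (by push_cast; linear_combination hbal)
  have him_pow : (u ^ q).im = 0 := by simpa [← map_pow] using him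
  obtain ⟨k, harg, hpow⟩ := exists_int_pow_eq_of_im_pow_eq_zero hu him_pow
  refine ⟨him, k, by field_simp; linarith, resonant_action_eq (normSq_pos.2 hu) ?_⟩
  rw [← map_pow, hpow, conj_ofReal, norm_pow_eq_normSq_rpow] at hbal
  exact_mod_cast hbal
end

section
/- For the second-order resonance model (q = 2), whose equilibria are the solutions u ∈ ℂ of 2u(δ − |u|²) + 2R·conj(u) = 0 with R > 0, the bifurcation diagram is: if δ < −R the only equilibrium is u = 0; if −R < δ < R the set of equilibria is exactly {0, √(δ+R), −√(δ+R)} (three points, the two nonzero ones lying on the real axis); and if δ > R the set of equilibria is exactly {0, √(δ+R), −√(δ+R), i√(δ−R), −i√(δ−R)} (five points, the two additional ones lying on the imaginary axis). -/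
open Complex Real

/-! For `q = 2` the equilibrium equation splits into `Re u · (δ + R − |u|²) = 0` and
`Im u · (δ − R − |u|²) = 0`. Since `R > 0`, the two brackets cannot vanish together, so a nonzero
equilibrium lies either on the real axis with `|u|² = δ + R` or on the imaginary axis with
`|u|² = δ − R`; each axis contributes the two square roots exactly when the right-hand side is
nonnegative. -/

theorem mul_self_eq_iff_eq_sqrt_or_eq_neg_sqrt {x c : ℝ} (hc : 0 ≤ c) :
    x * x = c ↔ x = √c ∨ x = -√c := by
  rw [← mul_self_eq_mul_self_iff, Real.mul_self_sqrt hc]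

theorem not_mul_self_eq_of_neg {x c : ℝ} (hc : c < 0) : ¬ x * x = c :=
  fun h ↦ (mul_self_nonneg x).not_gt (h ▸ hc)

namespace ResonanceEquilibrium

variable {δ R : ℝ} {u : ℂ}

theorem iff_re_im :
    2 * u * ((δ : ℂ) - (normSq u : ℂ)) + 2 * (R : ℂ) * (starRingEnd ℂ u) = 0 ↔
      u.re * (δ + R - normSq u) = 0 ∧ u.im * (δ - R - normSq u) = 0 := by
  simp only [Complex.ext_iff, add_re, add_im, mul_re, mul_im, sub_re, sub_im, ofReal_re,
    ofReal_im, conj_re, conj_im, zero_re, zero_im, re_ofNat, im_ofNat]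
  constructor <;> rintro ⟨h_re, h_im⟩ <;> constructor <;> linarith

theorem iff_zero_or_real_or_imaginary (hR : 0 < R) :
    2 * u * ((δ : ℂ) - (normSq u : ℂ)) + 2 * (R : ℂ) * (starRingEnd ℂ u) = 0 ↔
      u = 0 ∨ (u.im = 0 ∧ u.re * u.re = δ + R) ∨ (u.re = 0 ∧ u.im * u.im = δ - R) := by
  rw [iff_re_im, normSq_apply, Complex.ext_iff, zero_re, zero_im]
  constructor
  · rintro ⟨h_re, h_im⟩
    rcases mul_eq_zero.mp h_re with hre | hre
    · rcases mul_eq_zero.mp h_im with him | him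
      · exact Or.inl ⟨hre, him⟩
      · exact Or.inr (Or.inr ⟨hre, by rw [hre] at him; linarith⟩)
    · -- on this branch `δ − R − |u|² = −2R ≠ 0`, which forces `Im u = 0`
      have him : u.im = 0 := by
        rcases mul_eq_zero.mp h_im with him | him
        · exact him
        · linarith
      exact Or.inr (Or.inl ⟨him, by rw [him] at hre; linarith⟩)
  · rintro (⟨hre, him⟩ | ⟨him, hre⟩ | ⟨hre, him⟩) <;> simp [hre, him]

theorem real_axis_iff {c : ℝ} (hc : 0 ≤ c) :
    (u.im = 0 ∧ u.re * u.re = c) ↔ u = (√c : ℂ) ∨ u = -(√c : ℂ) := by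
  simp only [mul_self_eq_iff_eq_sqrt_or_eq_neg_sqrt hc, Complex.ext_iff, ofReal_re, ofReal_im,
    neg_re, neg_im, neg_zero]
  tauto

theorem imaginary_axis_iff {c : ℝ} (hc : 0 ≤ c) :
    (u.re = 0 ∧ u.im * u.im = c) ↔ u = I * (√c : ℂ) ∨ u = -(I * (√c : ℂ)) := by
  simp only [mul_self_eq_iff_eq_sqrt_or_eq_neg_sqrt hc, Complex.ext_iff, mul_re, mul_im, I_re,
    I_im, ofReal_re, ofReal_im, neg_re, neg_im, zero_mul, one_mul, mul_zero, sub_zero, zero_add,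
    neg_zero]
  tauto

end ResonanceEquilibrium

open ResonanceEquilibrium in
/-- Bifurcation diagram of the equilibria of the second-order (`q = 2`) resonance model
`2u(δ − |u|²) + 2R·conj u = 0` with `R > 0`: one fixed point for `δ < −R`, three for
`−R < δ < R` (the nonzero ones on the real axis), five for `δ > R` (two additional ones on
the imaginary axis). -/
theorem second_order_resonance_bifurcation
    (δ R : ℝ) (hR : 0 < R) :
    (δ < -R →
      {u : ℂ | 2 * u * ((δ : ℂ) - (normSq u : ℂ)) + 2 * (R : ℂ) * (starRingEnd ℂ u) = 0}
        = {0}) ∧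
    (-R < δ → δ < R →
      {u : ℂ | 2 * u * ((δ : ℂ) - (normSq u : ℂ)) + 2 * (R : ℂ) * (starRingEnd ℂ u) = 0}
        = {0, (Real.sqrt (δ + R) : ℂ), -(Real.sqrt (δ + R) : ℂ)}) ∧
    (R < δ →
      {u : ℂ | 2 * u * ((δ : ℂ) - (normSq u : ℂ)) + 2 * (R : ℂ) * (starRingEnd ℂ u) = 0}
        = {0, (Real.sqrt (δ + R) : ℂ), -(Real.sqrt (δ + R) : ℂ),
            Complex.I * (Real.sqrt (δ - R) : ℂ), -(Complex.I * (Real.sqrt (δ - R) : ℂ))}) := by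
  refine ⟨fun hδ ↦ ?_, fun hδ₁ hδ₂ ↦ ?_, fun hδ ↦ ?_⟩ <;> ext u <;>
    simp only [Set.mem_ofPred_eq, Set.mem_insert_iff, Set.mem_singleton_iff,
      iff_zero_or_real_or_imaginary hR]
  · simp [not_mul_self_eq_of_neg (show δ + R < 0 by linarith),
      not_mul_self_eq_of_neg (show δ - R < 0 by linarith)]
  · simp [real_axis_iff (show 0 ≤ δ + R by linarith),
      not_mul_self_eq_of_neg (show δ - R < 0 by linarith)]
  · rw [real_axis_iff (by linarith), imaginary_axis_iff (by linarith)]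
    tauto
end

section
/- (Sign criterion of Proposition 1.) Under the hypotheses of the averaged amplitude result — (θ, ε) a nonconstant P-periodic solution of θ̇ = −2ε, ε̇ = 2qRδ^{q/2}·sin(qθ) with δ > 0, R > 0, q > 0, and γ ∈ ℝ, T > 0 — the average over one period of F(t) = (2/(T·ΔH))·[(γ − 2)·δ·ε + ((1 + q/4)·γ − 2)·ε² + (q/4)·γ·ε³/δ] (with ΔH = 4Rδ^{q/2}) is strictly positive if and only if γ > 8/(4+q), strictly negative if and only if γ < 8/(4+q), and zero if and only if γ = 8/(4+q). In other words, under dissipation, the amplitude of libration grows on average when γ exceeds the critical value γ_c = 8/(4+q) and decays on average when γ is below it. -/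
open Real intervalIntegral Set Filter Topology

/-!
Along a solution, `θ̇ = −2ε` and the energy `E = q ε² − c cos(qθ)`, with `c = 2qRδ^(q/2)`, is
conserved, so both `ε` and `ε³ = ε (E + c cos(qθ)) / q` are exact derivatives of functions of
`θ` alone; since `θ` is periodic, their averages vanish. The average of `F` thus reduces to
`(2 / (T ΔH)) ((1 + q/4) γ − 2) ⟨ε²⟩`, whose sign is that of `γ − 8/(4+q)` because `⟨ε²⟩ > 0`:
a solution with `ε ≡ 0` on a time interval sits at an equilibrium, hence is constant by
uniqueness of solutions.
-/

theorem integral_eq_zero_of_hasDerivAt_of_eq {f f' : ℝ → ℝ} {a b : ℝ}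
    (hf : ∀ t, HasDerivAt f (f' t) t) (hf' : IntervalIntegrable f' MeasureTheory.volume a b)
    (hab : f a = f b) : ∫ t in a..b, f' t = 0 := by
  rw [integral_eq_sub_of_hasDerivAt (fun t _ => hf t) hf', hab, sub_self]

theorem integral_cubic_eq_of_odd_moments_eq_zero {f g : ℝ → ℝ}
    {a b c₁ c₂ c₃ : ℝ} (hf : Continuous f) (hg : ∀ t, g t = c₁ * f t + c₂ * f t ^ 2 + c₃ * f t ^ 3)
    (h₁ : ∫ t in a..b, f t = 0) (h₃ : ∫ t in a..b, f t ^ 3 = 0) :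
    ∫ t in a..b, g t = c₂ * ∫ t in a..b, f t ^ 2 := by
  have hint : ∀ {u : ℝ → ℝ}, Continuous u → IntervalIntegrable u MeasureTheory.volume a b :=
    fun hu => hu.intervalIntegrable a b
  simp only [hg]
  rw [integral_add (hint (by fun_prop)) (hint (by fun_prop)),
    integral_add (hint (by fun_prop)) (hint (by fun_prop)),
    integral_const_mul, integral_const_mul, integral_const_mul, h₁, h₃]
  ring

theorem sign_mul_sub_iff {A x y : ℝ} (hA : 0 < A) :
    (0 < A * (x - y) ↔ y < x) ∧ (A * (x - y) < 0 ↔ x < y) ∧ (A * (x - y) = 0 ↔ x = y) := by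
  refine ⟨?_, ?_, ?_⟩
  · rw [mul_pos_iff_of_pos_left hA, sub_pos]
  · rw [← neg_pos, ← mul_neg, mul_pos_iff_of_pos_left hA, neg_pos, sub_neg]
  · rw [mul_eq_zero, sub_eq_zero, or_iff_right hA.ne']

noncomputable def pendulumField (c q : ℝ) (p : ℝ × ℝ) : ℝ × ℝ :=
  (-2 * p.2, c * sin (q * p.1))

theorem lipschitzWith_pendulumField (c q : ℝ) : ∃ K, LipschitzWith K (pendulumField c q) :=
  ⟨_, ((lipschitzWith_smul (-2 : ℝ)).comp LipschitzWith.prod_snd).prodMk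
    ((lipschitzWith_smul c).comp
      (lipschitzWith_sin.comp ((lipschitzWith_smul q).comp LipschitzWith.prod_fst)))⟩

def IsPendulumSolution (c q : ℝ) (θ ε : ℝ → ℝ) : Prop :=
  ∀ t, HasDerivAt θ (-2 * ε t) t ∧ HasDerivAt ε (c * sin (q * θ t)) t

namespace IsPendulumSolution

variable {c q : ℝ} {θ ε : ℝ → ℝ}

theorem continuous_eps (h : IsPendulumSolution c q θ ε) : Continuous ε :=
  continuous_iff_continuousAt.mpr fun t => (h t).2.continuousAt

theorem energy_eq (h : IsPendulumSolution c q θ ε) (t s : ℝ) :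
    q * ε t ^ 2 - c * cos (q * θ t) = q * ε s ^ 2 - c * cos (q * θ s) := by
  have hE : ∀ t, HasDerivAt (fun t => q * ε t ^ 2 - c * cos (q * θ t)) 0 t := by
    intro t
    have hd := (((h t).2.pow 2).const_mul q).sub (((h t).1.const_mul q).cos.const_mul c)
    exact hd.congr_deriv (by push_cast; ring)
  exact is_const_of_deriv_eq_zero (fun t => (hE t).differentiableAt) (fun t => (hE t).deriv) t s

theorem integral_eps_eq_zero (h : IsPendulumSolution c q θ ε) {a b : ℝ} (hper : θ a = θ b) :
    ∫ t in a..b, ε t = 0 := by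
  have h' := integral_eq_zero_of_hasDerivAt_of_eq (fun t => (h t).1)
    ((continuous_const.mul h.continuous_eps).intervalIntegrable a b) hper
  rw [integral_const_mul] at h'
  exact (mul_eq_zero.mp h').resolve_left (by norm_num)

theorem hasDerivAt_eps_cube_primitive (h : IsPendulumSolution c q θ ε) (t : ℝ) :
    HasDerivAt (fun t => q * (q * ε 0 ^ 2 - c * cos (q * θ 0)) * θ t + c * sin (q * θ t))
      (-2 * q ^ 2 * ε t ^ 3) t := by
  have hd := ((h t).1.const_mul (q * (q * ε 0 ^ 2 - c * cos (q * θ 0)))).add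
    (((h t).1.const_mul q).sin.const_mul c)
  refine hd.congr_deriv ?_
  linear_combination (2 * q * ε t) * h.energy_eq t 0

theorem integral_eps_cube_eq_zero (h : IsPendulumSolution c q θ ε) (hq : q ≠ 0) {a b : ℝ}
    (hper : θ a = θ b) : ∫ t in a..b, ε t ^ 3 = 0 := by
  have h' := integral_eq_zero_of_hasDerivAt_of_eq h.hasDerivAt_eps_cube_primitive
    ((continuous_const.mul (h.continuous_eps.pow 3)).intervalIntegrable a b) (by simp only [hper])
  rw [integral_const_mul] at h'
  exact (mul_eq_zero.mp h').resolve_left (by simpa using hq)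

theorem eq_of_eventuallyEq_zero (h : IsPendulumSolution c q θ ε) (hc : c ≠ 0) {t₀ : ℝ}
    (h₀ : ε =ᶠ[𝓝 t₀] 0) (t : ℝ) : θ t = θ t₀ ∧ ε t = 0 := by
  have hsin : sin (q * θ t₀) = 0 :=
    (mul_eq_zero.mp <| (h t₀).2.unique <| (hasDerivAt_const t₀ 0).congr_of_eventuallyEq h₀)
      |>.resolve_left hc
  have hrest : pendulumField c q (θ t₀, 0) = 0 := by simp [pendulumField, hsin]
  obtain ⟨K, hK⟩ := lipschitzWith_pendulumField c q
  have hsol := ODE_solution_unique_univ (v := fun _ => pendulumField c q) (s := fun _ => univ)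
    (f := fun t => (θ t, ε t)) (g := fun _ => (θ t₀, 0)) (t₀ := t₀)
    (fun _ => hK.lipschitzOnWith) (fun t => ⟨(h t).1.prodMk (h t).2, trivial⟩)
    (fun t => ⟨hrest ▸ hasDerivAt_const t _, trivial⟩) (by simp [h₀.self_of_nhds])
  exact Prod.ext_iff.mp (congrFun hsol t)

theorem integral_eps_sq_pos (h : IsPendulumSolution c q θ ε) (hc : c ≠ 0) {a b : ℝ}
    (hab : a < b) (hnonconst : ¬ ∀ t s, θ t = θ s ∧ ε t = ε s) :
    0 < ∫ t in a..b, ε t ^ 2 := by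
  refine intervalIntegral.integral_pos hab (h.continuous_eps.pow 2).continuousOn
    (fun t _ => sq_nonneg _) ?_
  by_contra! hzero
  have h₀ : ε =ᶠ[𝓝 ((a + b) / 2)] 0 :=
    mem_of_superset (Icc_mem_nhds (by linarith) (by linarith))
      fun t ht => (sq_nonpos_iff _).mp (hzero t ht)
  refine hnonconst fun t s => ?_
  obtain ⟨hθt, hεt⟩ := h.eq_of_eventuallyEq_zero hc h₀ t
  obtain ⟨hθs, hεs⟩ := h.eq_of_eventuallyEq_zero hc h₀ s
  exact ⟨hθt.trans hθs.symm, hεt.trans hεs.symm⟩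

end IsPendulumSolution

theorem amplitude_growth_criterion_general
    (δ R q γ T : ℝ) (hδ : 0 < δ) (hR : 0 < R) (hq : 0 < q) (hT : 0 < T)
    (θ ε : ℝ → ℝ) (P : ℝ) (hP : 0 < P)
    (hθ : ∀ t, HasDerivAt θ (-2 * ε t) t)
    (hε : ∀ t, HasDerivAt ε (2 * q * R * δ ^ (q / 2) * Real.sin (q * θ t)) t)
    (hθper : θ P = θ 0)
    (hnonconst : ¬ (∀ t s : ℝ, θ t = θ s ∧ ε t = ε s)) :
    (0 < (1 / P) * ∫ t in (0 : ℝ)..P,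
        (2 / (T * (4 * R * δ ^ (q / 2)))) *
          ((γ - 2) * δ * ε t + ((1 + q / 4) * γ - 2) * (ε t) ^ 2
            + q / 4 * γ * (ε t) ^ 3 / δ)
      ↔ 8 / (4 + q) < γ) ∧
    ((1 / P) * (∫ t in (0 : ℝ)..P,
        (2 / (T * (4 * R * δ ^ (q / 2)))) *
          ((γ - 2) * δ * ε t + ((1 + q / 4) * γ - 2) * (ε t) ^ 2
            + q / 4 * γ * (ε t) ^ 3 / δ)) < 0
      ↔ γ < 8 / (4 + q)) ∧
    ((1 / P) * ∫ t in (0 : ℝ)..P,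
        (2 / (T * (4 * R * δ ^ (q / 2)))) *
          ((γ - 2) * δ * ε t + ((1 + q / 4) * γ - 2) * (ε t) ^ 2
            + q / 4 * γ * (ε t) ^ 3 / δ)
      = 0 ↔ γ = 8 / (4 + q)) := by
  have hsol : IsPendulumSolution (2 * q * R * δ ^ (q / 2)) q θ ε := fun t => ⟨hθ t, hε t⟩
  have hI₂ := hsol.integral_eps_sq_pos (by positivity) hP hnonconst
  rw [integral_const_mul, integral_cubic_eq_of_odd_moments_eq_zero
    (c₁ := (γ - 2) * δ) (c₂ := (1 + q / 4) * γ - 2) (c₃ := q / 4 * γ / δ)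
    hsol.continuous_eps (fun t => by ring) (hsol.integral_eps_eq_zero hθper.symm)
    (hsol.integral_eps_cube_eq_zero hq.ne' hθper.symm)]
  have hmean : (1 / P) * (2 / (T * (4 * R * δ ^ (q / 2))) *
      (((1 + q / 4) * γ - 2) * ∫ t in (0 : ℝ)..P, ε t ^ 2)) =
      ((1 / P) * (2 / (T * (4 * R * δ ^ (q / 2)))) * ((4 + q) / 4) *
        ∫ t in (0 : ℝ)..P, ε t ^ 2) * (γ - 8 / (4 + q)) := by
    field_simp
    ring
  rw [hmean]
  exact sign_mul_sub_iff (mul_pos (by positivity) hI₂)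

/-- Sign criterion of Proposition 1: for a nonconstant periodic solution of the pendulum
`θ̇ = −2ε`, `ε̇ = 2qRδ^(q/2)·sin(qθ)`, the average over one period of the dissipative
amplitude derivative `F = (2/(T·ΔH))·[(γ−2)δε + ((1+q/4)γ−2)ε² + (q/4)γε³/δ]`
is positive iff `γ > 8/(4+q)`, negative iff `γ < 8/(4+q)`, and zero iff `γ = 8/(4+q)`. -/
theorem amplitude_growth_criterion
    (δ R q γ T : ℝ) (hδ : 0 < δ) (hR : 0 < R) (hq : 0 < q) (hT : 0 < T)
    (θ ε : ℝ → ℝ) (P : ℝ) (hP : 0 < P)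
    (hθ : ∀ t, HasDerivAt θ (-2 * ε t) t)
    (hε : ∀ t, HasDerivAt ε (2 * q * R * δ ^ (q / 2) * Real.sin (q * θ t)) t)
    (hθper : θ P = θ 0) (hεper : ε P = ε 0)
    (hnonconst : ¬ (∀ t s : ℝ, θ t = θ s ∧ ε t = ε s)) :
    (0 < (1 / P) * ∫ t in (0 : ℝ)..P,
        (2 / (T * (4 * R * δ ^ (q / 2)))) *
          ((γ - 2) * δ * ε t + ((1 + q / 4) * γ - 2) * (ε t) ^ 2
            + q / 4 * γ * (ε t) ^ 3 / δ)
      ↔ 8 / (4 + q) < γ) ∧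
    ((1 / P) * (∫ t in (0 : ℝ)..P,
        (2 / (T * (4 * R * δ ^ (q / 2)))) *
          ((γ - 2) * δ * ε t + ((1 + q / 4) * γ - 2) * (ε t) ^ 2
            + q / 4 * γ * (ε t) ^ 3 / δ)) < 0
      ↔ γ < 8 / (4 + q)) ∧
    ((1 / P) * ∫ t in (0 : ℝ)..P,
        (2 / (T * (4 * R * δ ^ (q / 2)))) *
          ((γ - 2) * δ * ε t + ((1 + q / 4) * γ - 2) * (ε t) ^ 2
            + q / 4 * γ * (ε t) ^ 3 / δ)
      = 0 ↔ γ = 8 / (4 + q)) :=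
  amplitude_growth_criterion_general δ R q γ T hδ hR hq hT θ ε P hP hθ hε hθper hnonconst
end

section
/- Let p, q be positive integers and let Λ₁, Λ₂ be nonnegative reals satisfying the normalization ((p+q)/p)·Λ₁ + Λ₂ = 1. Set G = Λ₁ + Λ₂, γ₁ = 2·((p+q)/p)·G and γ₂ = 2G. Then 2 ≤ γ₁ ≤ 2(p+q)/p and 2p/(p+q) ≤ γ₂ ≤ 2, with the lower bounds attained when Λ₂ = 0 appropriately (γ₁ = 2 when Λ₁ = p/(p+q), γ₂ = 2p/(p+q) when Λ₁ = p/(p+q)) and upper bounds when Λ₁ = 0. In particular γ₁ ≥ 2 > 8/(4+q) = γ_c always holds: when the tidal dissipation is dominated by the inner planet, the amplitude of libration always increases. -/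
/-!
With `c = (p+q)/p ≥ 1` the normalization reads `c Λ₁ + Λ₂ = 1`, so on the constraint segment
`G = Λ₁ + Λ₂ = 1 - (c - 1) Λ₁` decreases linearly from `1` (at `Λ₁ = 0`) to `c⁻¹`
(at `Λ₁ = c⁻¹`, where `Λ₂ = 0`). Hence `c⁻¹ ≤ G ≤ 1`, which scaled by `2c` and by `2` gives the
bounds on `γ₁` and `γ₂`; and `γ_c = 8/(4+q) < 2` as soon as `q > 0`.
-/

section MulAddEqOne

variable {c a b : ℝ}

theorem one_le_mul_add_of_mul_add_eq_one (hc : 1 ≤ c) (hb : 0 ≤ b) (hab : c * a + b = 1) :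
    1 ≤ c * (a + b) := by
  nlinarith [mul_nonneg (sub_nonneg.2 hc) hb]

theorem add_le_one_of_mul_add_eq_one (hc : 1 ≤ c) (ha : 0 ≤ a) (hab : c * a + b = 1) :
    a + b ≤ 1 := by
  nlinarith [mul_nonneg (sub_nonneg.2 hc) ha]

theorem add_eq_inv_of_mul_add_eq_one (hc : c ≠ 0) (hab : c * a + b = 1) (ha : a = c⁻¹) :
    a + b = c⁻¹ := by
  rw [ha, mul_inv_cancel₀ hc] at hab
  rw [ha, show b = 0 by linarith, add_zero]

end MulAddEqOne

/-- Bounds on the limiting dissipation balance parameters `γ₁ = 2((p+q)/p)G` and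
`γ₂ = 2G` for a `(p+q):p` MMR with normalization `((p+q)/p)Λ₁ + Λ₂ = 1` and
`G = Λ₁ + Λ₂`: one has `2 ≤ γ₁ ≤ 2(p+q)/p` and `2p/(p+q) ≤ γ₂ ≤ 2`, the bounds being
attained at `Λ₁ = p/(p+q)` (i.e. `Λ₂ = 0`) and at `Λ₁ = 0`; in particular
`γ₁ ≥ 2 > 8/(4+q) = γ_c`, so when dissipation is dominated by the inner planet the
libration amplitude always grows. -/
theorem gamma_bounds
    (p q : ℕ) (hp : 0 < p) (hq : 0 < q)
    (Λ₁ Λ₂ : ℝ) (hΛ₁ : 0 ≤ Λ₁) (hΛ₂ : 0 ≤ Λ₂)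
    (hnorm : ((p : ℝ) + q) / p * Λ₁ + Λ₂ = 1) :
    (2 ≤ 2 * (((p : ℝ) + q) / p) * (Λ₁ + Λ₂)
      ∧ 2 * (((p : ℝ) + q) / p) * (Λ₁ + Λ₂) ≤ 2 * ((p : ℝ) + q) / p) ∧
    ((2 * p / ((p : ℝ) + q) ≤ 2 * (Λ₁ + Λ₂)) ∧ 2 * (Λ₁ + Λ₂) ≤ 2) ∧
    (Λ₁ = (p : ℝ) / (p + q) →
      2 * (((p : ℝ) + q) / p) * (Λ₁ + Λ₂) = 2
        ∧ 2 * (Λ₁ + Λ₂) = 2 * p / ((p : ℝ) + q)) ∧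
    (Λ₁ = 0 →
      2 * (((p : ℝ) + q) / p) * (Λ₁ + Λ₂) = 2 * ((p : ℝ) + q) / p
        ∧ 2 * (Λ₁ + Λ₂) = 2) ∧
    8 / (4 + (q : ℝ)) < 2 := by
  have hp' : (0 : ℝ) < p := by exact_mod_cast hp
  have hq' : (0 : ℝ) < q := by exact_mod_cast hq
  set c := ((p : ℝ) + q) / p with hc_def
  have hc : 1 ≤ c := by rw [hc_def, le_div_iff₀ hp']; linarith
  have hc₀ : 0 < c := by linarith
  rw [mul_div_assoc, mul_div_assoc, ← hc_def, ← inv_div, ← hc_def]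
  have hlow := one_le_mul_add_of_mul_add_eq_one hc hΛ₂ hnorm
  have hup := add_le_one_of_mul_add_eq_one hc hΛ₁ hnorm
  have hinv : c⁻¹ ≤ Λ₁ + Λ₂ := (inv_le_iff_one_le_mul₀' hc₀).2 hlow
  refine ⟨⟨by linarith, by nlinarith⟩, ⟨by linarith, by linarith⟩, fun h ↦ ?_, fun h ↦ ?_, ?_⟩
  · rw [add_eq_inv_of_mul_add_eq_one hc₀.ne' hnorm h, mul_assoc, mul_inv_cancel₀ hc₀.ne']
    exact ⟨mul_one 2, rfl⟩
  · rw [h, zero_add, show Λ₂ = 1 by simpa [h] using hnorm]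
    exact ⟨mul_one _, mul_one 2⟩
  · rw [div_lt_iff₀ (by positivity)]
    linarith
end
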